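/- Let β, x₁,…,x_d, b₁, b₂,… be independent indeterminates and work in the ring of formal power series over ℤ in these variables. Fix j with 1 ≤ j ≤ d and k ≥ 0. Then for every integer m with m ≥ k: Σ_{p=0}^{d-1} G^{(k)}_{m-p} · (-1)^p e_p^{(j)}(x) = x_j^{m-k} · [x_j|b]^k · ∏_{1≤i≤d, i≠j} (1+βx_i), where e_p^{(j)}(x) denotes the p-th elementary symmetric polynomial in the d-1 variables x₁,…,x_d with x_j omitted. -/

import Mathlib

/-!
Multiplying `F^{(k)}(u)` by `∏_{i≠j} (1 - xᵢu)`, whose `u^p`-coefficient is `(-1)^p e_p^{(j)}(x)`,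
cancels all geometric factors except the `j`-th and leaves
`∏ᵢ (1+βxᵢ) · ∏_ℓ ((1+βb_ℓ) + b_ℓ u) / (1 - x_j u)`. For `t ≥ k` its `u^t`-coefficient is
`∏ᵢ (1+βxᵢ) · x_j^{t-k} [x_j|b]^k`, because `x_j (1+βb_ℓ) + b_ℓ = x_j ⊕ b_ℓ`. Taking `t = m + s`
and summing with the weights `(-β)^s` that define `G`, the left side becomes
`∑_s (-βx_j)^s (1+βx_j)` times the right side, and this geometric series is `1`.
-/

open scoped BigOperators

namespace GrothDet

/-- Index type for the indeterminates: `β`, `x₁,…,x_d`, `b₁,b₂,…`. -/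
abbrev Idx (d : ℕ) := Unit ⊕ Fin d ⊕ ℕ

/-- The ambient ring: formal power series over `ℤ` in `β`, the `xᵢ` and the `bⱼ`. -/
abbrev R (d : ℕ) := MvPowerSeries (Idx d) ℤ

noncomputable def β (d : ℕ) : R d := MvPowerSeries.X (Sum.inl ())
noncomputable def x (d : ℕ) (i : Fin d) : R d := MvPowerSeries.X (Sum.inr (Sum.inl i))
noncomputable def b (d : ℕ) (ℓ : ℕ) : R d := MvPowerSeries.X (Sum.inr (Sum.inr ℓ))

/-- `x ⊕ y := x + y + βxy`. -/
noncomputable def oplus (d : ℕ) (u v : R d) : R d := u + v + β d * u * v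

/-- `[y|b]^k := (y ⊕ b₁)⋯(y ⊕ b_k)`. -/
noncomputable def fb (d : ℕ) (y : R d) (k : ℕ) : R d :=
  ∏ ℓ ∈ Finset.range k, oplus d y (b d ℓ)

/-- The multiplicative inverse of `1 + β * x j` (a unit since its constant term is `1`). -/
noncomputable def invOneAdd (d : ℕ) (j : Fin d) : R d :=
  MvPowerSeries.invOfUnit (1 + β d * x d j) 1

/-- `F^{(k)}(u) = ∏ᵢ (1+βxᵢ)/(1-xᵢu) · ∏_{ℓ=1}^k (1+(u+β)b_ℓ)` as a power series in `u`
over `R d`; here `(1-xᵢu)⁻¹ = ∑_n xᵢⁿ uⁿ`. -/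
noncomputable def F (d : ℕ) (k : ℕ) : PowerSeries (R d) :=
  (∏ i : Fin d,
      PowerSeries.C (1 + β d * x d i) * PowerSeries.mk fun n => x d i ^ n) *
    ∏ ℓ ∈ Finset.range k,
      (1 + (PowerSeries.X + PowerSeries.C (β d)) * PowerSeries.C (b d ℓ))

/-- `[u^t] F^{(k)}(u)`, extended by `0` in negative degrees `t`. -/
noncomputable def Fcoeff (d : ℕ) (k : ℕ) (t : ℤ) : R d :=
  if 0 ≤ t then PowerSeries.coeff t.toNat (F d k) else 0

/-- The sum `∑_{s≥0} f s` of a family of power series such that `β^s ∣ f s`: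
it is defined coefficientwise; on the coefficient of a monomial `n` only the
(finitely many) terms with `s ≤ n(β)` contribute, and the value is the limit of the
partial sums in the formal power series topology. -/
noncomputable def seriesSum (d : ℕ) (f : ℕ → R d) : R d :=
  (fun n => ∑ s ∈ Finset.range (n (Sum.inl ()) + 1), MvPowerSeries.coeff n (f s) :
    (Idx d →₀ ℕ) → ℤ)

/-- `G^{(k)}_m = ∑_{s≥0} (-β)^s [u^{m+s}] F^{(k)}(u)`. -/
noncomputable def G (d : ℕ) (k : ℕ) (m : ℤ) : R d :=
  seriesSum d fun s => (-β d) ^ s * Fcoeff d k (m + s)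

/-- The `p`-th elementary symmetric function of the family `f` restricted to `S`. -/
noncomputable def esym (d : ℕ) (S : Finset (Fin d)) (p : ℕ) (f : Fin d → R d) : R d :=
  ∑ t ∈ S.powersetCard p, ∏ i ∈ t, f i

/-- `x_i/(1+βx_i) = -x̄_i`. -/
noncomputable def xbar (d : ℕ) (i : Fin d) : R d := x d i * invOneAdd d i

end GrothDet

open Finset

namespace PowerSeries

variable {A ι : Type*} [CommRing A]

theorem mk_pow_mul_one_sub_C_mul_X (a : A) : (mk fun n => a ^ n) * (1 - C a * X) = 1 := by
  simpa [rescale_mk, rescale_X] using congrArg (rescale a) (mk_one_mul_one_sub_eq_one A)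

theorem coeff_prod_one_sub_C_mul_X (S : Finset ι) (f : ι → A) (p : ℕ) :
    coeff p (∏ i ∈ S, (1 - C (f i) * X)) = (-1) ^ p * ∑ t ∈ S.powersetCard p, ∏ i ∈ t, f i := by
  classical
  have hterm : ∀ t : Finset ι, ∏ i ∈ t, (C (-f i) * X) = C (∏ i ∈ t, -f i) * X ^ #t := by
    intro t
    rw [prod_mul_distrib, map_prod, prod_const]
  simp_rw [sub_eq_add_neg, ← neg_mul, ← map_neg, prod_one_add, hterm, map_sum, coeff_C_mul_X_pow]
  rw [← sum_filter, powersetCard_eq_filter, mul_sum]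
  refine sum_congr (filter_congr fun _ _ => eq_comm) fun t ht => ?_
  rw [prod_neg, (mem_filter.mp ht).2]

theorem coeff_mk_pow_mul_prod_C_add_C_mul_X (a : A) (c e : ι → A) (S : Finset ι) {t : ℕ}
    (ht : #S ≤ t) :
    coeff t ((mk fun n => a ^ n) * ∏ ℓ ∈ S, (C (c ℓ) + C (e ℓ) * X)) =
      a ^ (t - #S) * ∏ ℓ ∈ S, (c ℓ * a + e ℓ) := by
  classical
  induction S using Finset.induction_on generalizing t with
  | empty => simp [coeff_mk]
  | @insert ℓ S hℓ ih =>
    obtain ⟨t, rfl⟩ : ∃ t', t = t' + 1 := ⟨t - 1, by rw [card_insert_of_notMem hℓ] at ht; omega⟩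
    rw [card_insert_of_notMem hℓ] at ht ⊢
    have hexp : ∀ M : A⟦X⟧, M * (C (c ℓ) + C (e ℓ) * X) = C (c ℓ) * M + C (e ℓ) * (M * X) :=
      fun M => by ring
    rw [prod_insert hℓ, mul_left_comm, mul_comm, hexp, map_add, coeff_C_mul, coeff_C_mul,
      coeff_succ_mul_X, ih (by omega), ih (by omega), prod_insert hℓ,
      show t + 1 - #S = t - #S + 1 by omega, show t + 1 - (#S + 1) = t - #S by omega]
    ring

end PowerSeries

namespace GrothDet

open Finset PowerSeries

variable {d : ℕ}

theorem coeff_eq_zero_of_β_pow_dvd {g : R d} {s : ℕ} (h : β d ^ s ∣ g) (n : Idx d →₀ ℕ)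
    (hn : n (Sum.inl ()) < s) : MvPowerSeries.coeff n g = 0 :=
  MvPowerSeries.X_pow_dvd_iff.mp h n hn

theorem coeff_seriesSum_of_dvd {f : ℕ → R d} (hf : ∀ s, β d ^ s ∣ f s) (n : Idx d →₀ ℕ)
    {N : ℕ} (hN : n (Sum.inl ()) < N) :
    MvPowerSeries.coeff n (seriesSum d f) = ∑ s ∈ range N, MvPowerSeries.coeff n (f s) := by
  refine sum_subset (range_subset_range.mpr hN) fun s hs hs' => ?_
  rw [mem_range] at hs hs'
  exact coeff_eq_zero_of_β_pow_dvd (hf s) n (by omega)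

theorem coeff_seriesSum (f : ℕ → R d) (n : Idx d →₀ ℕ) :
    MvPowerSeries.coeff n (seriesSum d f) =
      ∑ s ∈ range (n (Sum.inl ()) + 1), MvPowerSeries.coeff n (f s) := rfl

theorem sum_seriesSum {ι : Type*} (T : Finset ι) (f : ι → ℕ → R d) :
    ∑ p ∈ T, seriesSum d (f p) = seriesSum d fun s => ∑ p ∈ T, f p s := by
  ext n
  simp only [map_sum, coeff_seriesSum]
  exact sum_comm

theorem seriesSum_mul {f : ℕ → R d} (hf : ∀ s, β d ^ s ∣ f s) (c : R d) :
    seriesSum d f * c = seriesSum d fun s => f s * c := by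
  ext n
  -- every antidiagonal pair `(n₁, n₂)` of `n` has `n₁(β) ≤ n(β)`, so one truncation serves all
  have hlt : ∀ q ∈ antidiagonal n, q.1 (Sum.inl ()) < n (Sum.inl ()) + 1 := fun q hq => by
    have := congrArg (· (Sum.inl ())) (mem_antidiagonal.mp hq)
    simp only [Finsupp.coe_add, Pi.add_apply] at this
    omega
  rw [coeff_seriesSum_of_dvd (fun s => dvd_mul_of_dvd_left (hf s) c) n (Nat.lt_add_one _),
    MvPowerSeries.coeff_mul]
  simp_rw [MvPowerSeries.coeff_mul]
  rw [sum_comm]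
  refine sum_congr rfl fun q hq => ?_
  rw [coeff_seriesSum_of_dvd hf q.1 (hlt q hq), sum_mul]

theorem seriesSum_neg_β_mul_pow_mul_one_add (y : R d) :
    seriesSum d (fun s => (-(β d * y)) ^ s * (1 + β d * y)) = 1 := by
  have hdvd : ∀ s, β d ^ s ∣ (-(β d * y)) ^ s := fun s =>
    pow_dvd_pow_of_dvd (dvd_neg.mpr (dvd_mul_right _ _)) s
  ext n
  rw [coeff_seriesSum_of_dvd (fun s => dvd_mul_of_dvd_left (hdvd s) _) n (Nat.lt_add_one _),
    ← map_sum, ← sum_mul, ← sub_neg_eq_add 1, geom_sum_mul_neg, map_sub,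
    coeff_eq_zero_of_β_pow_dvd (hdvd _) n (Nat.lt_add_one _), sub_zero]

theorem F_mul_prod_one_sub (k : ℕ) (j : Fin d) :
    F d k * ∏ i ∈ univ \ {j}, (1 - C (x d i) * X) =
      C (∏ i, (1 + β d * x d i)) * ((mk fun n => x d j ^ n) *
        ∏ ℓ ∈ range k, (C (1 + β d * b d ℓ) + C (b d ℓ) * X)) := by
  have hcancel : ∀ i, C (1 + β d * x d i) * (mk fun n => x d i ^ n) * (1 - C (x d i) * X) =
      C (1 + β d * x d i) := fun i => by rw [mul_assoc, mk_pow_mul_one_sub_C_mul_X, mul_one]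
  have hlin : ∀ ℓ, (1 + (X + C (β d)) * C (b d ℓ) : (R d)⟦X⟧) =
      C (1 + β d * b d ℓ) + C (b d ℓ) * X := fun ℓ => by simp only [map_add, map_mul, map_one]; ring
  have hrest : (∏ i ∈ ({j}ᶜ : Finset (Fin d)), C (1 + β d * x d i) * mk fun n => x d i ^ n) *
      ∏ i ∈ {j}ᶜ, (1 - C (x d i) * X) = ∏ i ∈ {j}ᶜ, C (1 + β d * x d i) := by
    rw [← prod_mul_distrib]
    exact prod_congr rfl fun i _ => hcancel i
  rw [F, Fintype.prod_eq_prod_compl_mul j,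
    Fintype.prod_eq_prod_compl_mul j (fun i => 1 + β d * x d i), map_mul, ← compl_eq_univ_sdiff,
    map_prod, ← hrest]
  simp_rw [hlin]
  ring

theorem coeff_F_mul_prod_one_sub {k t : ℕ} (j : Fin d) (hkt : k ≤ t) :
    coeff t (F d k * ∏ i ∈ univ \ {j}, (1 - C (x d i) * X)) =
      (∏ i, (1 + β d * x d i)) * (x d j ^ (t - k) * fb d (x d j) k) := by
  have h := coeff_mk_pow_mul_prod_C_add_C_mul_X (x d j) (fun ℓ => 1 + β d * b d ℓ) (b d)
    (range k) (t := t) (by rwa [card_range])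
  rw [F_mul_prod_one_sub, coeff_C_mul, h, card_range, fb]
  congr 2
  refine prod_congr rfl fun ℓ _ => ?_
  rw [oplus]
  ring

theorem sum_Fcoeff_mul_esym {k t : ℕ} (j : Fin d) (hkt : k ≤ t) :
    ∑ p ∈ range d, Fcoeff d k (t - p) * ((-1 : R d) ^ p * esym d (univ \ {j}) p (x d)) =
      (∏ i, (1 + β d * x d i)) * (x d j ^ (t - k) * fb d (x d j) k) := by
  have hcard : #(univ \ {j}) < d := by
    rw [card_sdiff_of_subset (subset_univ _), card_univ, Fintype.card_fin, card_singleton]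
    exact Nat.sub_lt j.pos Nat.one_pos
  set E := ∏ i ∈ univ \ {j}, (1 - C (x d i) * X)
  have hE : ∀ p, coeff p E = (-1 : R d) ^ p * esym d (univ \ {j}) p (x d) := fun p =>
    coeff_prod_one_sub_C_mul_X _ _ p
  have hesym_vanish : ∀ p ∈ range (max d (t + 1)), p ∉ range d →
      Fcoeff d k (t - p) * coeff p E = 0 := fun p _ hp => by
    rw [mem_range] at hp
    rw [hE, esym, powersetCard_eq_empty.mpr (by omega), sum_empty, mul_zero, mul_zero]
  have hFcoeff_vanish : ∀ p ∈ range (max d (t + 1)), p ∉ range (t + 1) →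
      Fcoeff d k (t - p) * coeff p E = 0 := fun p _ hp => by
    rw [mem_range] at hp
    rw [Fcoeff, if_neg (by omega), zero_mul]
  have hcauchy : ∑ p ∈ range (t + 1), coeff p E * coeff (t - p) (F d k) =
      ∑ p ∈ range (t + 1), Fcoeff d k (t - p) * coeff p E := sum_congr rfl fun p hp => by
    rw [mem_range] at hp
    rw [Fcoeff, if_pos (by omega), mul_comm, show (t - p : ℤ).toNat = t - p by omega]
  simp_rw [← hE]
  rw [← coeff_F_mul_prod_one_sub j hkt, mul_comm, coeff_mul,
    Nat.sum_antidiagonal_eq_sum_range_succ (fun p q => coeff p E * coeff q (F d k)), hcauchy,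
    sum_subset (range_subset_range.mpr (le_max_left d (t + 1))) hesym_vanish,
    sum_subset (range_subset_range.mpr (le_max_right d (t + 1))) hFcoeff_vanish]

/-- For `m ≥ k`:
`∑_{p=0}^{d-1} G^{(k)}_{m-p} (-1)^p e_p^{(j)}(x) = x_j^{m-k} [x_j|b]^k ∏_{i≠j} (1+βx_i)`. -/
theorem grothendieck_convolution_e
    (d k : ℕ) (j : Fin d) (m : ℤ) (hm : (k : ℤ) ≤ m) :
    ∑ p ∈ Finset.range d,
        G d k (m - p) * ((-1 : R d) ^ p * esym d (Finset.univ \ {j}) p (x d))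
      = x d j ^ (m - k).toNat * fb d (x d j) k *
          ∏ i ∈ Finset.univ \ {j}, (1 + β d * x d i) := by
  obtain ⟨n, rfl⟩ : ∃ n : ℕ, m = n := ⟨m.toNat, by omega⟩
  rw [show ((n : ℤ) - k).toNat = n - k by omega]
  set w : ℕ → R d := fun p => (-1 : R d) ^ p * esym d (univ \ {j}) p (x d)
  set rhs := x d j ^ (n - k) * fb d (x d j) k * ∏ i ∈ univ \ {j}, (1 + β d * x d i)
  have hβ : ∀ s, β d ^ s ∣ (-β d) ^ s := fun s => pow_dvd_pow_of_dvd (dvd_neg.mpr dvd_rfl) s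
  have hβx : ∀ s, β d ^ s ∣ (-(β d * x d j)) ^ s * (1 + β d * x d j) := fun s =>
    dvd_mul_of_dvd_left (pow_dvd_pow_of_dvd (dvd_neg.mpr (dvd_mul_right _ _)) s) _
  have hshift : ∀ s : ℕ, ∑ p ∈ range d, (-β d) ^ s * Fcoeff d k (n - p + s) * w p =
      (-(β d * x d j)) ^ s * (1 + β d * x d j) * rhs := fun s => by
    have h := sum_Fcoeff_mul_esym (k := k) (t := n + s) j (by omega)
    push_cast at h
    simp_rw [mul_assoc, ← mul_sum, sub_add_eq_add_sub]
    rw [h, Fintype.prod_eq_mul_prod_compl j, compl_eq_univ_sdiff,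
      show n + s - k = n - k + s by omega, neg_mul_eq_neg_mul, mul_pow]
    ring
  calc ∑ p ∈ range d, G d k (n - p) * w p
      = seriesSum d fun s => ∑ p ∈ range d, (-β d) ^ s * Fcoeff d k (n - p + s) * w p := by
        rw [← sum_seriesSum]
        exact sum_congr rfl fun p _ => seriesSum_mul (fun s => dvd_mul_of_dvd_left (hβ s) _) _
    _ = seriesSum d (fun s => (-(β d * x d j)) ^ s * (1 + β d * x d j)) * rhs := by
        simp_rw [seriesSum_mul hβx, hshift]
    _ = rhs := by rw [seriesSum_neg_β_mul_pow_mul_one_add, one_mul]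

end GrothDet
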